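/- Let R : E → F be a relation morphism in CRG (multiplicative, decomposable, proper, vertex disjoint, target bijective, monotone) that is regular, and let f ∈ F¹ be an edge whose source is a regular vertex of F. If (x, f) ∈ R and x' is a proper initial subpath of x, then t_PE(x') is a regular vertex of E (i.e., emits at least one and only finitely many edges). -/
import Mathlib


/-! Basic theory of directed graphs, finite paths, and relation morphisms
(following "Relation morphisms of directed graphs"). -/

structure DGraph where
  V : Type
  E : Type
  s : E → V
  t : E → V

namespace DGraph

/-- `G.chain u l w` : the list of edges `l` forms a path from `u` to `w`. -/
def chain (G : DGraph) : G.V → List G.E → G.V → Prop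
  | v, [], w => v = w
  | v, e :: es, w => G.s e = v ∧ G.chain (G.t e) es w

theorem chain_append {G : DGraph} :
    ∀ {l1 : List G.E} {u v w : G.V} {l2 : List G.E},
      G.chain u l1 v → G.chain v l2 w → G.chain u (l1 ++ l2) w
  | [], _, _, _, _, h1, h2 => by cases h1; exact h2
  | e :: es, _, _, _, _, h1, h2 => ⟨h1.1, chain_append h1.2 h2⟩

/-- A vertex is regular if it emits at least one and only finitely many edges. -/
def IsRegularV (G : DGraph) (v : G.V) : Prop :=
  (∃ e, G.s e = v) ∧ {e | G.s e = v}.Finite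

end DGraph

/-- A finite path in a directed graph (a vertex when `edges = []`). -/
structure FPath (G : DGraph) where
  src : G.V
  tgt : G.V
  edges : List G.E
  chain : G.chain src edges tgt

namespace FPath

variable {G : DGraph}

/-- A vertex viewed as a length-zero path. -/
def ofVertex (v : G.V) : FPath G := ⟨v, v, [], rfl⟩

/-- An edge viewed as a length-one path. -/
def ofEdge (e : G.E) : FPath G := ⟨G.s e, G.t e, [e], ⟨rfl, rfl⟩⟩

/-- Concatenation of composable paths. -/
def comp (x y : FPath G) (h : x.tgt = y.src) : FPath G where
  src := x.src
  tgt := y.tgt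
  edges := x.edges ++ y.edges
  chain := DGraph.chain_append x.chain (by rw [h]; exact y.chain)

/-- `x.le y` : `x` is an initial subpath of `y`. -/
def le (x y : FPath G) : Prop := x.src = y.src ∧ x.edges <+: y.edges

/-- Two paths are comparable if one is an initial subpath of the other. -/
def comparable (x y : FPath G) : Prop := x.le y ∨ y.le x

/-- A path of length zero. -/
def IsVertex (x : FPath G) : Prop := x.edges = []

end FPath

/-- `IsConcat xs x` : the (nonempty) list of paths `xs` concatenates to `x`. -/
inductive IsConcat {G : DGraph} : List (FPath G) → FPath G → Prop
  | single (x : FPath G) : IsConcat [x] x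
  | cons (x : FPath G) {xs : List (FPath G)} {y : FPath G} (h : x.tgt = y.src) :
      IsConcat xs y → IsConcat (x :: xs) (x.comp y h)

/-- A relation between the finite paths of two graphs. -/
abbrev GraphRel (E F : DGraph) := Set (FPath E × FPath F)

/-- Composition of relations (`RelComp R S` is `S ∘ R` in the usual notation). -/
def RelComp {A B C : Type*} (R : Set (A × B)) (S : Set (B × C)) : Set (A × C) :=
  {p | ∃ b, (p.1, b) ∈ R ∧ (b, p.2) ∈ S}

/-- The relation `R_f = {(x, f x)}` associated to a map. -/
def relOfFun {A B : Type*} (f : A → B) : Set (A × B) := {p | p.2 = f p.1}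

/-- The relation `R^g = {(g y, y)}` associated to a map in the opposite direction. -/
def relOfCofun {A B : Type*} (g : B → A) : Set (A × B) := {p | p.1 = g p.2}

/-- A relation is transitively closed if `(x,y), (x,y'), (x',y') ∈ R` implies `(x',y) ∈ R`. -/
def TransClosed {X Y : Type*} (R : Set (X × Y)) : Prop :=
  ∀ x x' y y', (x, y) ∈ R → (x, y') ∈ R → (x', y') ∈ R → (x', y) ∈ R

/-- A relation morphism of graphs: preimages of vertices are vertices, and
sources and targets are preserved. -/
structure IsRelMorphism (E F : DGraph) (R : GraphRel E F) : Prop where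
  vertex : ∀ x y, (x, y) ∈ R → y.IsVertex → x.IsVertex
  src : ∀ x y, (x, y) ∈ R → (FPath.ofVertex x.src, FPath.ofVertex y.src) ∈ R
  tgt : ∀ x y, (x, y) ∈ R → (FPath.ofVertex x.tgt, FPath.ofVertex y.tgt) ∈ R

/-- Multiplicativity of a relation morphism. -/
def RelMult {E F : DGraph} (R : GraphRel E F) : Prop :=
  ∀ (x x' : FPath E) (y y' : FPath F) (hx : x.tgt = x'.src) (hy : y.tgt = y'.src),
    (x, y) ∈ R → (x', y') ∈ R → (x.comp x' hx, y.comp y' hy) ∈ R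

/-- Decomposability of a relation morphism. -/
def RelDecomp {E F : DGraph} (R : GraphRel E F) : Prop :=
  ∀ (y y' : FPath F) (h : y.tgt = y'.src) (xb : FPath E),
    (xb, y.comp y' h) ∈ R →
    ∃ (x x' : FPath E) (hx : x.tgt = x'.src),
      (x, y) ∈ R ∧ (x', y') ∈ R ∧ x.comp x' hx = xb

/-- Properness: all relation preimages are finite. -/
def RelProper {E F : DGraph} (R : GraphRel E F) : Prop :=
  ∀ y : FPath F, {x | (x, y) ∈ R}.Finite

/-- Vertex disjointness: distinct vertices have disjoint relation preimages. -/
def RelVertexDisjoint {E F : DGraph} (R : GraphRel E F) : Prop :=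
  ∀ v v' : F.V, v ≠ v' → ∀ u : FPath E,
    (u, FPath.ofVertex v) ∈ R → (u, FPath.ofVertex v') ∈ R → False

/-- Target injectivity: the target map restricted to the preimage of each edge is injective. -/
def RelTargetInj {E F : DGraph} (R : GraphRel E F) : Prop :=
  ∀ (f : F.E) (x x' : FPath E), (x, FPath.ofEdge f) ∈ R → (x', FPath.ofEdge f) ∈ R →
    x.tgt = x'.tgt → x = x'

/-- Target surjectivity: the target map `R⁻¹(f) → R⁻¹(t f)` is surjective for each edge. -/
def RelTargetSurj {E F : DGraph} (R : GraphRel E F) : Prop :=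
  ∀ (f : F.E) (u : E.V), (FPath.ofVertex u, FPath.ofVertex (F.t f)) ∈ R →
    ∃ x : FPath E, (x, FPath.ofEdge f) ∈ R ∧ x.tgt = u

/-- Monotonicity of a relation morphism. -/
def RelMonotone {E F : DGraph} (R : GraphRel E F) : Prop :=
  ∀ (x x' : FPath E) (f f' : F.E), (x, FPath.ofEdge f) ∈ R → (x', FPath.ofEdge f') ∈ R →
    x.le x' → x = x' ∧ f = f'

/-- Regularity of a relation morphism. -/
def RelRegular {E F : DGraph} (R : GraphRel E F) : Prop :=
  ∀ v : F.V, F.IsRegularV v → ∀ u : E.V, (FPath.ofVertex u, FPath.ofVertex v) ∈ R →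
    ∀ x : FPath E, x.src = u →
      ∃ (x' : FPath E) (f : F.E), (x', FPath.ofEdge f) ∈ R ∧ F.s f = v ∧ x.comparable x'

/-- A path homomorphism: maps vertices to vertices, commutes with sources and
targets, and is multiplicative with respect to concatenation. -/
def IsPathHom {F E : DGraph} (θ : FPath F → FPath E) : Prop :=
  (∀ x : FPath F, x.IsVertex → (θ x).IsVertex) ∧
  (∀ x : FPath F, θ (FPath.ofVertex x.src) = FPath.ofVertex (θ x).src) ∧
  (∀ x : FPath F, θ (FPath.ofVertex x.tgt) = FPath.ofVertex (θ x).tgt) ∧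
  (∀ (x x' : FPath F) (h : x.tgt = x'.src) (h' : (θ x).tgt = (θ x').src),
    θ (x.comp x' h) = (θ x).comp (θ x') h')

/-- A graph homomorphism is a length-preserving path homomorphism. -/
def IsGraphHom {E F : DGraph} (φ : FPath E → FPath F) : Prop :=
  IsPathHom φ ∧ ∀ x : FPath E, (φ x).edges.length = x.edges.length

/-- Properness of a graph homomorphism: finite fibers over vertices and edges. -/
def GHProper {E F : DGraph} (φ : FPath E → FPath F) : Prop :=
  ∀ y : FPath F, y.edges.length ≤ 1 → {x | φ x = y}.Finite

/-- Target injectivity of a graph homomorphism. -/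
def GHTargetInj {E F : DGraph} (φ : FPath E → FPath F) : Prop :=
  ∀ (f : F.E) (x x' : FPath E), φ x = FPath.ofEdge f → φ x' = FPath.ofEdge f →
    x.tgt = x'.tgt → x = x'

/-- Target surjectivity of a graph homomorphism. -/
def GHTargetSurj {E F : DGraph} (φ : FPath E → FPath F) : Prop :=
  ∀ (f : F.E) (u : E.V), φ (FPath.ofVertex u) = FPath.ofVertex (F.t f) →
    ∃ x : FPath E, φ x = FPath.ofEdge f ∧ x.tgt = u

/-- The relation graph `G_R` of a relation morphism `R : E → F`. -/
def relGraph {E F : DGraph} (R : GraphRel E F) (hR : IsRelMorphism E F R) : DGraph where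
  V := {p : E.V × F.V // (FPath.ofVertex p.1, FPath.ofVertex p.2) ∈ R}
  E := {p : FPath E × F.E // (p.1, FPath.ofEdge p.2) ∈ R}
  s := fun e => ⟨(e.1.1.src, F.s e.1.2), hR.src _ _ e.2⟩
  t := fun e => ⟨(e.1.1.tgt, F.t e.1.2), hR.tgt _ _ e.2⟩

theorem DGraph.chain_unique {G : DGraph} : ∀ {l : List G.E} {v w w' : G.V},
    G.chain v l w → G.chain v l w' → w = w'
  | [], _, _, _, h1, h2 => h1.symm.trans h2
  | _ :: _, _, _, _, h1, h2 => DGraph.chain_unique h1.2 h2.2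

theorem DGraph.chain_split {G : DGraph} : ∀ {l1 l2 : List G.E} {v w : G.V},
    G.chain v (l1 ++ l2) w → ∃ m, G.chain v l1 m ∧ G.chain m l2 w
  | [], _, v, _, h => ⟨v, rfl, h⟩
  | _ :: es, _, _, _, h => by
      obtain ⟨m, h1, h2⟩ := DGraph.chain_split (l1 := es) h.2
      exact ⟨m, ⟨h.1, h1⟩, h2⟩

theorem FPath.ext' {G : DGraph} {x y : FPath G} (hs : x.src = y.src)
    (he : x.edges = y.edges) : x = y := by
  obtain ⟨a, b, l, h⟩ := x; obtain ⟨a', b', l', h'⟩ := y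
  simp only at hs he
  cases hs; cases he
  cases DGraph.chain_unique h h'
  rfl

/-- for a regular CRG morphism `R : E → F`, an edge `f` of `F`
emitted by a regular vertex, `(x, f) ∈ R`, and a proper initial subpath `x'` of
`x`, the target of `x'` is a regular vertex of `E`. -/
theorem statement17 {E F : DGraph} {R : GraphRel E F}
    (hR : IsRelMorphism E F R) (hm : RelMult R) (hd : RelDecomp R)
    (hp : RelProper R) (hv : RelVertexDisjoint R)
    (hti : RelTargetInj R) (hts : RelTargetSurj R) (hmo : RelMonotone R)
    (hreg : RelRegular R)
    (f : F.E) (hf : F.IsRegularV (F.s f))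
    (x x' : FPath E) (hx : (x, FPath.ofEdge f) ∈ R)
    (hle : x'.le x) (hne : x' ≠ x) :
    E.IsRegularV x'.tgt := by
  classical
  obtain ⟨rest, hrest⟩ := hle.2
  have hsrc : x'.src = x.src := hle.1
  have hrestne : rest ≠ [] := by
    intro h
    exact hne (FPath.ext' hsrc (by simpa [h] using hrest))
  obtain ⟨e0, rest', rfl⟩ := List.exists_cons_of_ne_nil hrestne
  have hxc : E.chain x.src (x'.edges ++ (e0 :: rest')) x.tgt := hrest.symm ▸ x.chain
  obtain ⟨m, hm1, hm2⟩ := DGraph.chain_split hxc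
  have hm : m = x'.tgt := DGraph.chain_unique hm1 (hsrc ▸ x'.chain)
  constructor
  · exact ⟨e0, hm ▸ hm2.1⟩
  · set v := F.s f with hv
    have hux : (FPath.ofVertex x.src, FPath.ofVertex v) ∈ R := hR.src _ _ hx
    set n := x'.edges.length with hn
    have hxlen : n < x.edges.length := by
      rw [← hrest]; simp [hn]
    have claim : ∀ e : E.E, E.s e = x'.tgt →
        ∃ p : FPath E, (∃ f', F.s f' = v ∧ (p, FPath.ofEdge f') ∈ R) ∧
          p.edges[n]? = some e := by
      intro e he
      have hcomp : x'.tgt = (FPath.ofEdge e).src := he.symm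
      obtain ⟨p, f', hpR, hsf', hc⟩ :=
        hreg v hf x.src hux (x'.comp (FPath.ofEdge e) hcomp) hsrc
      refine ⟨p, ⟨f', hsf', hpR⟩, ?_⟩
      have hce : (x'.comp (FPath.ofEdge e) hcomp).edges = x'.edges ++ [e] := rfl
      have hpre : x'.edges ++ [e] <+: p.edges := by
        rcases hc with h | h
        · exact hce ▸ h.2
        · have hp2 : p.edges <+: x'.edges ++ [e] := hce ▸ h.2
          rcases le_or_gt p.edges.length n with hlen | hlen
          · exfalso
            have hpx' : p.edges <+: x'.edges :=
              List.prefix_of_prefix_length_le hp2 (List.prefix_append _ _) hlen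
            have hplex : p.le x :=
              ⟨h.1.trans hsrc, hpx'.trans (hrest ▸ List.prefix_append _ _)⟩
            obtain ⟨hpx, _⟩ := hmo p x f' f hpR hx hplex
            rw [hpx] at hlen
            omega
          · have : p.edges = x'.edges ++ [e] := by
              have hle2 : p.edges.length ≤ (x'.edges ++ [e]).length := hp2.length_le
              exact hp2.eq_of_length (by simp at hle2 ⊢; omega)
            rw [this]
      obtain ⟨t, ht⟩ := hpre
      rw [← ht, List.append_assoc, List.getElem?_append]
      simp [hn]
    have hS : (⋃ f' ∈ {f' : F.E | F.s f' = v},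
        {p : FPath E | (p, FPath.ofEdge f') ∈ R}).Finite :=
      hf.2.biUnion (fun f' _ => hp (FPath.ofEdge f'))
    have hfin : (⋃ p ∈ (⋃ f' ∈ {f' : F.E | F.s f' = v},
        {p : FPath E | (p, FPath.ofEdge f') ∈ R}),
        {e : E.E | p.edges[n]? = some e}).Finite :=
      hS.biUnion (fun p _ => Set.Subsingleton.finite (fun a ha b hb => by
        have ha' : p.edges[n]? = some a := ha
        have hb' : p.edges[n]? = some b := hb
        exact Option.some_injective _ (ha'.symm.trans hb')))
    refine Set.Finite.subset hfin ?_
    intro e he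
    obtain ⟨p, ⟨f', hsf', hpR⟩, hg⟩ := claim e he
    exact Set.mem_biUnion (Set.mem_biUnion hsf' hpR) hg
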